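/- If the diversity-based algorithm is run with k = 1 (so R_0 = ∅), the extracted explanation tree maximizes the total number of rule vertices; i.e., selecting maximal-weight children under W_{T,∅} (atom vertex: max of children; rule vertex: 1 + sum of children) yields a longest explanation. -/

import Mathlib

/-!
Under `W_{T,∅}` a rule vertex weighs one plus the total weight of its children and an atom
vertex weighs the maximum over its children. By induction, an explanation tree below a vertex
has at most as many rule vertices as the weight of that vertex, with equality for the tree
picked by max-weight selection. Equality needs the rule-vertex sets of sibling subtrees to be
disjoint, which holds because vertices are identified with subtrees and these are distinct
(`(occs T).Nodup`).
-/

/-- A ground normal rule: head atom, positive body atoms, negative body atoms. -/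
structure Rule (α : Type) where
  head : α
  pos : Finset α
  neg : Finset α

/-- Finite rose trees with vertex labels in `L`; a vertex of a tree is identified
with the subtree hanging from it. -/
inductive RTree (L : Type) : Type
  | node : L → List (RTree L) → RTree L

namespace RTree

def label {L : Type} : RTree L → L
  | node l _ => l

def children {L : Type} : RTree L → List (RTree L)
  | node _ cs => cs

/-- The list of all vertices (subtree occurrences) of a tree. -/
def occs {L : Type} : RTree L → List (RTree L)
  | node l cs => node l cs :: (cs.attach.map (fun c => occs c.1)).flatten
decreasing_by
  have := List.sizeOf_lt_of_mem c.2
  simp only [RTree.node.sizeOf_spec]; omega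

end RTree

/-- Rule `r` supports atom `p` using atoms in `X` but not in `Z`:
`H(r) = p`, `B⁺(r) ⊆ X \ Z` and `B⁻(r) ∩ X = ∅`. -/
def Supports {α : Type} (X Z : Set α) (r : Rule α) (p : α) : Prop :=
  r.head = p ∧ ↑r.pos ⊆ X \ Z ∧ ∀ a ∈ r.neg, a ∉ X

/-- `IsAOTNode P X Z t`: `t` is (a node of) the and-or explanation tree w.r.t.
program `P` and answer set `X`, where `Z` is the set of atoms labeling the
ancestor atom vertices.  An atom vertex labeled `p` has one rule-vertex child for
each rule of `P` supporting `p` using atoms in `X` but not in `insert p Z` (and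
only such children), and has at least one child (so that every leaf is a rule
vertex); a rule vertex labeled `r` has one atom-vertex child for each atom of
`B⁺(r)` (and only such children). -/
inductive IsAOTNode {α : Type} (P : Set (Rule α)) (X : Set α) :
    Set α → RTree (α ⊕ Rule α) → Prop
  | atom {Z : Set α} {p : α} {cs : List (RTree (α ⊕ Rule α))}
      (hp : p ∈ X) (hne : cs ≠ [])
      (hcomplete : ∀ r ∈ P, Supports X (insert p Z) r p →
        ∃ c ∈ cs, RTree.label c = Sum.inr r)
      (hsound : ∀ c ∈ cs,
        ∃ r ∈ P, Supports X (insert p Z) r p ∧ RTree.label c = Sum.inr r)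
      (hrec : ∀ c ∈ cs, IsAOTNode P X (insert p Z) c) :
      IsAOTNode P X Z (.node (.inl p) cs)
  | rule {Z : Set α} {r : Rule α} {cs : List (RTree (α ⊕ Rule α))}
      (hcomplete : ∀ a ∈ r.pos, ∃ c ∈ cs, RTree.label c = Sum.inl a)
      (hsound : ∀ c ∈ cs, ∃ a ∈ r.pos, RTree.label c = Sum.inl a)
      (hrec : ∀ c ∈ cs, IsAOTNode P X Z c) :
      IsAOTNode P X Z (.node (.inr r) cs)

open Classical in
/-- The difference weight `W_{T,R}` relative to a set `R` of rule (and-) vertices: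
an atom (or-) vertex gets the maximum of its children's weights; a rule (and-)
vertex gets the sum of its children's weights, plus 1 if it does not belong to
`R` and plus 0 if it does. -/
noncomputable def wdiff {α ρ : Type} (R : Set (RTree (α ⊕ ρ))) : RTree (α ⊕ ρ) → ℕ
  | .node (.inl _) cs => ((cs.attach.map (fun c => wdiff R c.1)).foldr max 0)
  | .node (.inr r) cs => (cs.attach.map (fun c => wdiff R c.1)).sum +
      (if RTree.node (.inr r) cs ∈ R then 0 else 1)
decreasing_by
  all_goals (have := List.sizeOf_lt_of_mem c.2; simp only [RTree.node.sizeOf_spec]; omega)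

/-- `Sel T V`: `V` is the set of rule (and-) vertices of some explanation tree
(solution subtree) of the and-or tree `T`: at each atom (or-) vertex one child is
chosen, at each rule vertex all children are kept, and `V` collects the rule
vertices (as vertices of `T`) that are visited. -/
inductive Sel {α ρ : Type} : RTree (α ⊕ ρ) → Set (RTree (α ⊕ ρ)) → Prop
  | atom {a : α} {cs : List (RTree (α ⊕ ρ))} {c : RTree (α ⊕ ρ)} {V : Set (RTree (α ⊕ ρ))} :
      c ∈ cs → Sel c V → Sel (.node (.inl a) cs) V
  | rule {r : ρ} {cs : List (RTree (α ⊕ ρ))} (f : RTree (α ⊕ ρ) → Set (RTree (α ⊕ ρ)))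
      (h : ∀ c ∈ cs, Sel c (f c)) :
      Sel (.node (.inr r) cs) (insert (.node (.inr r) cs) (⋃ c ∈ cs, f c))

/-- `MaxSel R T V`: `V` is the set of rule vertices of the explanation tree
extracted by selecting, at each atom (or-) vertex, a child of maximum
`wdiff R`-weight, and at each rule vertex all children. -/
inductive MaxSel {α ρ : Type} (R : Set (RTree (α ⊕ ρ))) :
    RTree (α ⊕ ρ) → Set (RTree (α ⊕ ρ)) → Prop
  | atom {a : α} {cs : List (RTree (α ⊕ ρ))} {c : RTree (α ⊕ ρ)} {V : Set (RTree (α ⊕ ρ))} :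
      c ∈ cs → (∀ c' ∈ cs, wdiff R c' ≤ wdiff R c) → MaxSel R c V →
      MaxSel R (.node (.inl a) cs) V
  | rule {r : ρ} {cs : List (RTree (α ⊕ ρ))} (f : RTree (α ⊕ ρ) → Set (RTree (α ⊕ ρ)))
      (h : ∀ c ∈ cs, MaxSel R c (f c)) :
      MaxSel R (.node (.inr r) cs) (insert (.node (.inr r) cs) (⋃ c ∈ cs, f c))


namespace Set

variable {β γ : Type*}

lemma ncard_biUnion_list_le (cs : List β) (f : β → Set γ) :
    (⋃ c ∈ cs, f c).ncard ≤ (cs.map fun c => (f c).ncard).sum := by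
  induction cs with
  | nil => simp
  | cons a l ih =>
    simp only [List.mem_cons, iUnion_iUnion_eq_or_left, List.map_cons, List.sum_cons]
    exact (ncard_union_le _ _).trans (Nat.add_le_add_left ih _)

lemma ncard_biUnion_list_of_pairwise_disjoint {cs : List β} {f : β → Set γ}
    (hfin : ∀ c ∈ cs, (f c).Finite) (hdisj : cs.Pairwise fun a b => Disjoint (f a) (f b)) :
    (⋃ c ∈ cs, f c).ncard = (cs.map fun c => (f c).ncard).sum := by
  induction cs with
  | nil => simp
  | cons a l ih =>
    simp only [List.forall_mem_cons] at hfin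
    obtain ⟨hdisj_head, hdisj_tail⟩ := List.pairwise_cons.mp hdisj
    have hd : Disjoint (f a) (⋃ c ∈ l, f c) :=
      disjoint_iUnion₂_right.mpr hdisj_head
    simp only [List.mem_cons, iUnion_iUnion_eq_or_left, List.map_cons, List.sum_cons]
    rw [ncard_union_eq hd hfin.1 (l.finite_toSet.biUnion hfin.2), ih hfin.2 hdisj_tail]

end Set

namespace RTree

variable {L : Type}

lemma occs_node (l : L) (cs : List (RTree L)) :
    occs (node l cs) = node l cs :: (cs.map occs).flatten := by
  rw [occs, List.attach_map_val]

lemma mem_occs_self (t : RTree L) : t ∈ occs t := by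
  cases t with | node l cs => rw [occs_node]; exact List.mem_cons_self

lemma mem_occs_node_of_mem_occs {l : L} {cs : List (RTree L)} {c t : RTree L}
    (hc : c ∈ cs) (ht : t ∈ occs c) : t ∈ occs (node l cs) := by
  rw [occs_node]
  exact List.mem_cons_of_mem _ (List.mem_flatten.mpr ⟨occs c, List.mem_map_of_mem hc, ht⟩)

lemma nodup_occs_node_iff {l : L} {cs : List (RTree L)} :
    (occs (node l cs)).Nodup ↔ node l cs ∉ (cs.map occs).flatten ∧
      (∀ c ∈ cs, (occs c).Nodup) ∧ cs.Pairwise fun a b => (occs a).Disjoint (occs b) := by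
  rw [occs_node, List.nodup_cons, List.nodup_flatten, List.forall_mem_map, List.pairwise_map]

end RTree

open RTree

variable {α ρ : Type}

section Weight

variable (R : Set (RTree (α ⊕ ρ)))

lemma wdiff_node_inl (a : α) (cs : List (RTree (α ⊕ ρ))) :
    wdiff R (.node (.inl a) cs) = (cs.map (wdiff R)).foldr max 0 := by
  rw [wdiff, List.attach_map_val]

lemma wdiff_le_wdiff_node_inl {a : α} {cs : List (RTree (α ⊕ ρ))} {c : RTree (α ⊕ ρ)}
    (hc : c ∈ cs) : wdiff R c ≤ wdiff R (.node (.inl a) cs) := by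
  rw [wdiff_node_inl]
  exact List.le_max_of_le' 0 (List.mem_map_of_mem hc) le_rfl

lemma wdiff_node_inl_eq_of_isMax {a : α} {cs : List (RTree (α ⊕ ρ))} {c : RTree (α ⊕ ρ)}
    (hc : c ∈ cs) (hmax : ∀ c' ∈ cs, wdiff R c' ≤ wdiff R c) :
    wdiff R (.node (.inl a) cs) = wdiff R c := by
  refine le_antisymm ?_ (wdiff_le_wdiff_node_inl R hc)
  rw [wdiff_node_inl]
  exact List.max_le_of_forall_le _ _ (List.forall_mem_map.mpr hmax)

end Weight

lemma wdiff_empty_node_inr (r : ρ) (cs : List (RTree (α ⊕ ρ))) :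
    wdiff (∅ : Set (RTree (α ⊕ ρ))) (.node (.inr r) cs) = (cs.map (wdiff ∅)).sum + 1 := by
  rw [wdiff, List.attach_map_val, if_neg (Set.notMem_empty _)]

namespace Sel

lemma subset_occs {T : RTree (α ⊕ ρ)} {V : Set (RTree (α ⊕ ρ))} (h : Sel T V) :
    V ⊆ {t | t ∈ occs T} := by
  induction h with
  | atom hc _ ih => exact fun t ht => mem_occs_node_of_mem_occs hc (ih ht)
  | rule f _ ih =>
    rintro t (rfl | ht)
    · exact mem_occs_self _
    · obtain ⟨c, hc, htc⟩ := Set.mem_iUnion₂.mp ht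
      exact mem_occs_node_of_mem_occs hc (ih c hc htc)

lemma finite {T : RTree (α ⊕ ρ)} {V : Set (RTree (α ⊕ ρ))} (h : Sel T V) : V.Finite :=
  (occs T).finite_toSet.subset h.subset_occs

lemma ncard_le_wdiff_empty {T : RTree (α ⊕ ρ)} {V : Set (RTree (α ⊕ ρ))} (h : Sel T V) :
    V.ncard ≤ wdiff (∅ : Set (RTree (α ⊕ ρ))) T := by
  induction h with
  | atom hc _ ih => exact ih.trans (wdiff_le_wdiff_node_inl ∅ hc)
  | @rule r cs f _ ih =>
    calc (insert (node (.inr r) cs) (⋃ c ∈ cs, f c)).ncard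
        ≤ (⋃ c ∈ cs, f c).ncard + 1 := Set.ncard_insert_le _ _
      _ ≤ (cs.map fun c => (f c).ncard).sum + 1 :=
          Nat.add_le_add_right (Set.ncard_biUnion_list_le cs f) 1
      _ ≤ (cs.map (wdiff ∅)).sum + 1 := Nat.add_le_add_right (List.sum_le_sum ih) 1
      _ = wdiff ∅ (node (.inr r) cs) := (wdiff_empty_node_inr r cs).symm

end Sel

namespace MaxSel

lemma toSel {R : Set (RTree (α ⊕ ρ))} {T : RTree (α ⊕ ρ)} {V : Set (RTree (α ⊕ ρ))}
    (h : MaxSel R T V) : Sel T V := by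
  induction h with
  | atom hc _ _ ih => exact .atom hc ih
  | rule f _ ih => exact .rule f ih

lemma ncard_eq_wdiff_empty {T : RTree (α ⊕ ρ)} {V : Set (RTree (α ⊕ ρ))}
    (h : MaxSel (∅ : Set (RTree (α ⊕ ρ))) T V) (hnd : (occs T).Nodup) :
    V.ncard = wdiff (∅ : Set (RTree (α ⊕ ρ))) T := by
  induction h with
  | atom hc hmax _ ih =>
    rw [ih ((nodup_occs_node_iff.mp hnd).2.1 _ hc), wdiff_node_inl_eq_of_isMax ∅ hc hmax]
  | @rule r cs f h ih =>
    obtain ⟨hroot, hnd_children, hdisj_children⟩ := nodup_occs_node_iff.mp hnd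
    have hsel : ∀ c ∈ cs, Sel c (f c) := fun c hc => (h c hc).toSel
    have hdisj : cs.Pairwise fun a b => Disjoint (f a) (f b) :=
      hdisj_children.imp_of_mem fun ha hb hab => Set.disjoint_left.mpr fun _ hta htb =>
        hab ((hsel _ ha).subset_occs hta) ((hsel _ hb).subset_occs htb)
    have hroot_notMem : node (.inr r) cs ∉ ⋃ c ∈ cs, f c := fun hmem => by
      obtain ⟨c, hc, htc⟩ := Set.mem_iUnion₂.mp hmem
      exact hroot (List.mem_flatten.mpr
        ⟨occs c, List.mem_map_of_mem hc, (hsel c hc).subset_occs htc⟩)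
    have hfin : ∀ c ∈ cs, (f c).Finite := fun c hc => (hsel c hc).finite
    rw [Set.ncard_insert_of_notMem hroot_notMem (cs.finite_toSet.biUnion hfin),
      Set.ncard_biUnion_list_of_pairwise_disjoint hfin hdisj, wdiff_empty_node_inr,
      List.map_congr_left fun c hc => ih c hc (hnd_children c hc)]

end MaxSel

theorem maxSel_empty_yields_longest_general {α : Type}
    (T : RTree (α ⊕ Rule α)) (hnd : (RTree.occs T).Nodup)
    (V : Set (RTree (α ⊕ Rule α))) (hV : MaxSel ∅ T V) :
    Sel T V ∧ ∀ V', Sel T V' → V'.ncard ≤ V.ncard :=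
  ⟨hV.toSel, fun _ hV' => hV'.ncard_le_wdiff_empty.trans_eq (hV.ncard_eq_wdiff_empty hnd).symm⟩

/-- With `R = ∅` (i.e. `k = 1`), max-weight extraction under `W_{T,∅}` yields a
longest explanation: its number of rule vertices is maximal among all
explanation trees in `T`. -/
theorem maxSel_empty_yields_longest {α : Type} (P : Set (Rule α)) (X : Set α) (p : α)
    (T : RTree (α ⊕ Rule α)) (hT : IsAOTNode P X ∅ T)
    (hroot : RTree.label T = Sum.inl p) (hnd : (RTree.occs T).Nodup)
    (V : Set (RTree (α ⊕ Rule α))) (hV : MaxSel ∅ T V) :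
    Sel T V ∧ ∀ V', Sel T V' → V'.ncard ≤ V.ncard :=
  maxSel_empty_yields_longest_general T hnd V hV
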